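/- For every unit vector Ψ ∈ V, writing c = ‖Ψ − ⟨v, Ψ⟩v‖ (so 0 ≤ c ≤ 1), the expectation value of H satisfies ⟨Ψ, HΨ⟩ ≥ (1 − c²)ω₋ + c²ω₊ − 2c√(1 − c²)·b. -/

import Mathlib

/-!
Split `Ψ = a • v + φ` with `a = ⟪v, Ψ⟫` and `φ ⊥ v`, so that `‖a‖ = √(1 - c²)` and `‖φ‖ = c`.
Since `H` is symmetric, `re ⟪Ψ, HΨ⟫ = ‖a‖² ω₋ + 2 re (ā ⟪v, Hφ⟫) + re ⟪φ, Hφ⟫`; the last term is at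
least `c² ω₊` and the cross term at least `-‖a‖ b c`.
-/

open scoped InnerProductSpace ComplexConjugate

section

variable {𝕜 E : Type*} [RCLike 𝕜] [NormedAddCommGroup E] [InnerProductSpace 𝕜 E]

theorem inner_sub_inner_smul_of_norm_eq_one {v : E} (hv : ‖v‖ = 1) (x : E) :
    ⟪v, x - ⟪v, x⟫_𝕜 • v⟫_𝕜 = 0 := by
  rw [inner_sub_right, inner_smul_right, inner_self_eq_norm_sq_to_K, hv]
  simp

theorem norm_inner_sq_add_norm_sub_inner_smul_sq {v : E} (hv : ‖v‖ = 1) (x : E) :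
    ‖⟪v, x⟫_𝕜‖ ^ 2 + ‖x - ⟪v, x⟫_𝕜 • v‖ ^ 2 = ‖x‖ ^ 2 := by
  have hperp : ⟪⟪v, x⟫_𝕜 • v, x - ⟪v, x⟫_𝕜 • v⟫_𝕜 = 0 := by
    rw [inner_smul_left, inner_sub_inner_smul_of_norm_eq_one hv, mul_zero]
  have := norm_add_sq_eq_norm_sq_add_norm_sq_of_inner_eq_zero _ _ hperp
  rw [add_sub_cancel, norm_smul, hv, mul_one] at this
  linear_combination -this

theorem LinearMap.IsSymmetric.re_inner_map_smul_add {T : E →ₗ[𝕜] E} (hT : T.IsSymmetric)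
    (a : 𝕜) (v φ : E) :
    RCLike.re ⟪a • v + φ, T (a • v + φ)⟫_𝕜 =
      ‖a‖ ^ 2 * RCLike.re ⟪v, T v⟫_𝕜 + 2 * RCLike.re (conj a * ⟪v, T φ⟫_𝕜)
        + RCLike.re ⟪φ, T φ⟫_𝕜 := by
  have hcross : ⟪φ, T v⟫_𝕜 = conj ⟪v, T φ⟫_𝕜 := by rw [← hT, inner_conj_symm]
  have hre : RCLike.re (a * conj ⟪v, T φ⟫_𝕜) = RCLike.re (conj a * ⟪v, T φ⟫_𝕜) := by
    rw [← RCLike.conj_re, map_mul, RCLike.conj_conj]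
  simp only [map_add, map_smul, inner_add_left, inner_add_right, inner_smul_left,
    inner_smul_right, hcross, mul_add, ← mul_assoc, RCLike.mul_conj]
  rw [← RCLike.ofReal_pow, RCLike.re_ofReal_mul, hre]
  ring

theorem neg_norm_mul_le_re_conj_mul (a z : 𝕜) : -(‖a‖ * ‖z‖) ≤ RCLike.re (conj a * z) := by
  have := RCLike.abs_re_le_norm (conj a * z)
  rw [norm_mul, RCLike.norm_conj] at this
  exact neg_le_of_abs_le this

end

theorem expectation_value_lower_bound_general
    {V : Type*} [NormedAddCommGroup V] [InnerProductSpace ℂ V]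
    (H : V →ₗ[ℂ] V) (hH : H.IsSymmetric)
    (v : V) (hv : ‖v‖ = 1)
    (ωm ωp b : ℝ)
    (hdiag : (inner ℂ v (H v) : ℂ) = (ωm : ℂ))
    (hperp : ∀ φ : V, (inner ℂ v φ : ℂ) = 0 → ωp * ‖φ‖ ^ 2 ≤ ((inner ℂ φ (H φ) : ℂ)).re)
    (hoff : ∀ φ : V, (inner ℂ v φ : ℂ) = 0 → ‖inner ℂ v (H φ)‖ ≤ b * ‖φ‖) :
    ∀ Ψ : V, ‖Ψ‖ = 1 →
      (1 - ‖Ψ - (inner ℂ v Ψ : ℂ) • v‖ ^ 2) * ωm + ‖Ψ - (inner ℂ v Ψ : ℂ) • v‖ ^ 2 * ωp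
        - 2 * ‖Ψ - (inner ℂ v Ψ : ℂ) • v‖ * Real.sqrt (1 - ‖Ψ - (inner ℂ v Ψ : ℂ) • v‖ ^ 2) * b
      ≤ ((inner ℂ Ψ (H Ψ) : ℂ)).re := by
  intro Ψ hΨ
  set a := ⟪v, Ψ⟫_ℂ
  set φ := Ψ - a • v
  have hφ : ⟪v, φ⟫_ℂ = 0 := inner_sub_inner_smul_of_norm_eq_one hv Ψ
  have hpyth : ‖a‖ ^ 2 = 1 - ‖φ‖ ^ 2 := by
    have := norm_inner_sq_add_norm_sub_inner_smul_sq (𝕜 := ℂ) hv Ψ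
    rw [hΨ, one_pow] at this
    linarith
  have hcross : -(‖a‖ * (b * ‖φ‖)) ≤ (conj a * ⟪v, H φ⟫_ℂ).re :=
    (neg_le_neg (mul_le_mul_of_nonneg_left (hoff φ hφ) (norm_nonneg a))).trans
      (neg_norm_mul_le_re_conj_mul a _)
  have hexpand : (⟪Ψ, H Ψ⟫_ℂ).re =
      ‖a‖ ^ 2 * ωm + 2 * (conj a * ⟪v, H φ⟫_ℂ).re + (⟪φ, H φ⟫_ℂ).re := by
    have hsplit : a • v + φ = Ψ := add_sub_cancel _ _
    simpa only [hsplit, hdiag, RCLike.re_to_complex, Complex.ofReal_re] using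
      hH.re_inner_map_smul_add a v φ
  rw [← hpyth, Real.sqrt_sq (norm_nonneg a), hexpand]
  linarith [hperp φ hφ]

/-- For every unit vector `Ψ ∈ V`, writing `c = ‖Ψ − ⟨v, Ψ⟩v‖`, the expectation
value of `H` satisfies `⟨Ψ, HΨ⟩ ≥ (1 − c²)ω₋ + c²ω₊ − 2c√(1 − c²)·b`.
Here `ωm = ω₋`, `ωp = ω₊`. -/
theorem expectation_value_lower_bound
    {V : Type*} [NormedAddCommGroup V] [InnerProductSpace ℂ V] [FiniteDimensional ℂ V]
    (H : V →ₗ[ℂ] V) (hH : H.IsSymmetric)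
    (v : V) (hv : ‖v‖ = 1)
    (ωm ωp b : ℝ) (hω : ωm < ωp) (hb : 0 ≤ b)
    (hdiag : (inner ℂ v (H v) : ℂ) = (ωm : ℂ))
    (hperp : ∀ φ : V, (inner ℂ v φ : ℂ) = 0 → ωp * ‖φ‖ ^ 2 ≤ ((inner ℂ φ (H φ) : ℂ)).re)
    (hoff : ∀ φ : V, (inner ℂ v φ : ℂ) = 0 → ‖inner ℂ v (H φ)‖ ≤ b * ‖φ‖) :
    ∀ Ψ : V, ‖Ψ‖ = 1 →
      (1 - ‖Ψ - (inner ℂ v Ψ : ℂ) • v‖ ^ 2) * ωm + ‖Ψ - (inner ℂ v Ψ : ℂ) • v‖ ^ 2 * ωp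
        - 2 * ‖Ψ - (inner ℂ v Ψ : ℂ) • v‖ * Real.sqrt (1 - ‖Ψ - (inner ℂ v Ψ : ℂ) • v‖ ^ 2) * b
      ≤ ((inner ℂ Ψ (H Ψ) : ℂ)).re :=
  expectation_value_lower_bound_general H hH v hv ωm ωp b hdiag hperp hoff
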